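/- arXiv:2101.02824 — 4 statements merged into one kernel-verified Lean document; each statement's English description precedes it below -/
import Mathlib

section
/- Let Y, Z : Ω → E be measurable random vectors on a probability space (Ω, μ) such that Y and Z are independent, Y is integrable with E[Y] = x, and Z is square-integrable with E[Z] = x + ε for some fixed vectors x, ε ∈ E. Let f : E → E be measurable with f ∘ Y square-integrable, and set σ² := E[‖Z − x‖²]. Then E[‖f(Y) − x‖²] = E[‖f(Y) − Z‖²] − σ² + 2⟨ε, E[f(Y)] − x⟩. -/
open MeasureTheory ProbabilityTheory
open scoped RealInnerProductSpace

/-! Expanding `‖(f(Y) - x) - (Z - x)‖²` leaves the cross term `E⟨f(Y) - x, Z - x⟩`, which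
independence factors as `⟨E[f(Y)] - x, E[Z] - x⟩ = ⟨E[f(Y)] - x, ε⟩`. -/

namespace ProbabilityTheory

variable {Ω E : Type*} [MeasurableSpace Ω] {μ : Measure Ω}
  [NormedAddCommGroup E] [InnerProductSpace ℝ E] [MeasurableSpace E] [BorelSpace E]
  {A B : Ω → E}

lemma IndepFun.integrable_inner (hAB : IndepFun A B μ) (hA : Integrable A μ)
    (hB : Integrable B μ) : Integrable (fun ω => ⟪A ω, B ω⟫) μ :=
  hAB.integrable_bilin hA hB (innerSL ℝ)

lemma IndepFun.integral_inner [CompleteSpace E] (hAB : IndepFun A B μ) (hA : Integrable A μ)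
    (hB : Integrable B μ) : ∫ ω, ⟪A ω, B ω⟫ ∂μ = ⟪∫ ω, A ω ∂μ, ∫ ω, B ω ∂μ⟫ :=
  hAB.integral_bilin hA hB (innerSL ℝ)

lemma IndepFun.integral_norm_sub_sq [CompleteSpace E] [IsFiniteMeasure μ]
    (hAB : IndepFun A B μ) (hA : MemLp A 2 μ) (hB : MemLp B 2 μ) :
    ∫ ω, ‖A ω - B ω‖ ^ 2 ∂μ
      = ∫ ω, ‖A ω‖ ^ 2 ∂μ - 2 * ⟪∫ ω, A ω ∂μ, ∫ ω, B ω ∂μ⟫ + ∫ ω, ‖B ω‖ ^ 2 ∂μ := by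
  have hA₁ := hA.integrable one_le_two
  have hB₁ := hB.integrable one_le_two
  have hA_sq := (memLp_two_iff_integrable_sq_norm hA.1).1 hA
  have hB_sq := (memLp_two_iff_integrable_sq_norm hB.1).1 hB
  have hcross := (hAB.integrable_inner hA₁ hB₁).const_mul 2
  simp_rw [norm_sub_sq_real]
  rw [integral_add (f := fun ω => ‖A ω‖ ^ 2 - 2 * ⟪A ω, B ω⟫) (hA_sq.sub hcross) hB_sq,
    integral_sub hA_sq hcross, integral_const_mul, hAB.integral_inner hA₁ hB₁]

end ProbabilityTheory

theorem neighbor2neighbor_theorem1_fixed_gt_general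
    {Ω : Type*} [MeasurableSpace Ω] (μ : Measure Ω) [IsProbabilityMeasure μ]
    {d : ℕ} (Y Z : Ω → EuclideanSpace ℝ (Fin d)) (x ε : EuclideanSpace ℝ (Fin d))
    (hInd : IndepFun Y Z μ)
    (hZsq : MemLp Z 2 μ) (hEZ : ∫ ω, Z ω ∂μ = x + ε)
    (f : EuclideanSpace ℝ (Fin d) → EuclideanSpace ℝ (Fin d))
    (hf : Measurable f) (hfY : MemLp (fun ω => f (Y ω)) 2 μ) :
    ∫ ω, ‖f (Y ω) - x‖ ^ 2 ∂μ
      = ∫ ω, ‖f (Y ω) - Z ω‖ ^ 2 ∂μ - ∫ ω, ‖Z ω - x‖ ^ 2 ∂μ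
        + 2 * ⟪ε, (∫ ω, f (Y ω) ∂μ) - x⟫ := by
  have hcentered : IndepFun (fun ω => f (Y ω) - x) (fun ω => Z ω - x) μ :=
    hInd.comp (hf.sub measurable_const) (measurable_id.sub measurable_const)
  have hexpand :=
    hcentered.integral_norm_sub_sq (hfY.sub (memLp_const x)) (hZsq.sub (memLp_const x))
  simp only [sub_sub_sub_cancel_right] at hexpand
  rw [hexpand, integral_sub (hfY.integrable one_le_two) (integrable_const x),
    integral_sub (hZsq.integrable one_le_two) (integrable_const x), hEZ,
    integral_const, probReal_univ, one_smul, add_sub_cancel_left, real_inner_comm]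
  ring

/-- **Theorem 1 (conditional form, fixed ground truth `x`).**
If `Y` and `Z` are independent random vectors with `E[Y] = x` and `E[Z] = x + ε`,
`Z` and `f ∘ Y` square-integrable, then
`E[‖f(Y) − x‖²] = E[‖f(Y) − Z‖²] − E[‖Z − x‖²] + 2⟨ε, E[f(Y)] − x⟩`. -/
theorem neighbor2neighbor_theorem1_fixed_gt
    {Ω : Type*} [MeasurableSpace Ω] (μ : Measure Ω) [IsProbabilityMeasure μ]
    {d : ℕ} (Y Z : Ω → EuclideanSpace ℝ (Fin d)) (x ε : EuclideanSpace ℝ (Fin d))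
    (hY : Measurable Y) (hZ : Measurable Z)
    (hInd : IndepFun Y Z μ)
    (hYint : Integrable Y μ) (hEY : ∫ ω, Y ω ∂μ = x)
    (hZsq : MemLp Z 2 μ) (hEZ : ∫ ω, Z ω ∂μ = x + ε)
    (f : EuclideanSpace ℝ (Fin d) → EuclideanSpace ℝ (Fin d))
    (hf : Measurable f) (hfY : MemLp (fun ω => f (Y ω)) 2 μ) :
    ∫ ω, ‖f (Y ω) - x‖ ^ 2 ∂μ
      = ∫ ω, ‖f (Y ω) - Z ω‖ ^ 2 ∂μ - ∫ ω, ‖Z ω - x‖ ^ 2 ∂μ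
        + 2 * ⟪ε, (∫ ω, f (Y ω) ∂μ) - x⟫ :=
  neighbor2neighbor_theorem1_fixed_gt_general μ Y Z x ε hInd hZsq hEZ f hf hfY
end

section
/- Let Ω be a standard Borel probability space and X, Y, Z : Ω → E measurable random vectors such that Y and Z are conditionally independent given the σ-algebra generated by X, Y is square-integrable with conditional expectation E[Y | σ(X)] = X almost surely, and Z is square-integrable with E[Z | σ(X)] = X + ε almost surely for a fixed (deterministic) vector ε ∈ E. Let f : E → E be measurable with f ∘ Y square-integrable. Then E[‖f(Y) − X‖²] = E[‖f(Y) − Z‖²] − E[‖Z − X‖²] + 2⟨ε, E[f(Y) − X]⟩. -/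
/-!
Writing `f(Y) - Z = (f(Y) - X) - (Z - X)` and expanding the square reduces the identity to the
cross term `E⟨f(Y) - X, Z - X⟩ = ⟨ε, E[f(Y) - X]⟩`. Given `σ(X)`, the vectors `f(Y)` and `Z` are
independent and `X` is known, so the conditional expectation of the cross term factors as
`⟨E[f(Y) | X] - X, E[Z | X] - X⟩ = ⟨E[f(Y) - X | X], ε⟩`; taking expectations gives the claim.
-/

open MeasureTheory ProbabilityTheory
open scoped RealInnerProductSpace

theorem MeasureTheory.MemLp.integrable_inner {α E : Type*} {_ : MeasurableSpace α} {μ : Measure α}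
    [NormedAddCommGroup E] [InnerProductSpace ℝ E] {U V : α → E}
    (hU : MemLp U 2 μ) (hV : MemLp V 2 μ) :
    Integrable (fun ω ↦ ⟪U ω, V ω⟫) μ :=
  memLp_one_iff_integrable.1 ((innerSL ℝ).memLp_of_bilin 1 hU hV)

theorem MeasureTheory.integral_norm_sub_sq {α E : Type*} {_ : MeasurableSpace α}
    {μ : Measure α} [NormedAddCommGroup E] [InnerProductSpace ℝ E] {F G : α → E}
    (hF : MemLp F 2 μ) (hG : MemLp G 2 μ) :
    ∫ ω, ‖F ω - G ω‖ ^ 2 ∂μ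
      = ∫ ω, ‖F ω‖ ^ 2 ∂μ - 2 * ∫ ω, ⟪F ω, G ω⟫ ∂μ + ∫ ω, ‖G ω‖ ^ 2 ∂μ := by
  have hF' := (memLp_two_iff_integrable_sq_norm hF.1).mp hF
  have hG' := (memLp_two_iff_integrable_sq_norm hG.1).mp hG
  have hFG := (hF.integrable_inner hG).const_mul 2
  have hFFG : Integrable (fun ω ↦ ‖F ω‖ ^ 2 - 2 * ⟪F ω, G ω⟫) μ := hF'.sub hFG
  simp_rw [norm_sub_sq_real]
  rw [integral_add hFFG hG', integral_sub hF' hFG, integral_const_mul]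

theorem MeasureTheory.condExp_sub_of_stronglyMeasurable_right {α E : Type*}
    {m mα : MeasurableSpace α} {μ : Measure α} [NormedAddCommGroup E] [NormedSpace ℝ E]
    [CompleteSpace E] (hm : m ≤ mα) [SigmaFinite (μ.trim hm)] {U W : α → E}
    (hU : Integrable U μ) (hW : StronglyMeasurable[m] W) (hWi : Integrable W μ) :
    μ[fun ω ↦ U ω - W ω | m] =ᵐ[μ] fun ω ↦ μ[U | m] ω - W ω := by
  filter_upwards [condExp_sub hU hWi m] with ω hω
  change μ[U - W | m] ω = _
  rw [hω, Pi.sub_apply, condExp_of_stronglyMeasurable hm hW hWi]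

namespace ProbabilityTheory.CondIndepFun

variable {Ω : Type*} {m : MeasurableSpace Ω} [mΩ : MeasurableSpace Ω] [StandardBorelSpace Ω]
  {hm : m ≤ mΩ} {μ : Measure Ω} [IsFiniteMeasure μ]

theorem ae_indepFun_condExpKernel {β γ : Type*} [MeasurableSpace β] [MeasurableSpace γ]
    [MeasurableSpace.CountablyGenerated β] [MeasurableSpace.CountablyGenerated γ]
    {U : Ω → β} {V : Ω → γ} (hU : Measurable U) (hV : Measurable V)
    (hUV : CondIndepFun m hm U V μ) :
    ∀ᵐ ω ∂μ, U ⟂ᵢ[condExpKernel μ m ω] V := by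
  have h := (condIndepFun_iff_map_prod_eq_prod_map_map hU hV).mp hUV
  filter_upwards [ae_of_ae_trim hm h] with ω hω
  rw [indepFun_iff_map_prod_eq_prod_map_map hU.aemeasurable hV.aemeasurable]
  simpa [Kernel.map_apply _ (hU.prodMk hV), Kernel.map_apply _ hU, Kernel.map_apply _ hV,
    Kernel.prod_apply] using hω

variable {E : Type*} [NormedAddCommGroup E] [InnerProductSpace ℝ E] [CompleteSpace E]
  [MeasurableSpace E] [BorelSpace E] [SecondCountableTopology E] {U V : Ω → E}

theorem condExp_inner (hU : Measurable U) (hV : Measurable V)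
    (hUV : CondIndepFun m hm U V μ) (hUi : Integrable U μ) (hVi : Integrable V μ)
    (hUVi : Integrable (fun ω ↦ ⟪U ω, V ω⟫) μ) :
    μ[fun ω ↦ ⟪U ω, V ω⟫ | m] =ᵐ[μ] fun ω ↦ ⟪μ[U | m] ω, μ[V | m] ω⟫ := by
  filter_upwards [hUV.ae_indepFun_condExpKernel hU hV, hUi.condExpKernel_ae, hVi.condExpKernel_ae,
    condExp_ae_eq_integral_condExpKernel hm hUVi, condExp_ae_eq_integral_condExpKernel hm hUi,
    condExp_ae_eq_integral_condExpKernel hm hVi] with ω hind hUω hVω hUV' hU' hV'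
  rw [hUV', hU', hV']
  exact hind.integral_bilin hUω hVω (innerSL ℝ)

theorem condExp_inner_sub_sub {W : Ω → E}
    (hU : Measurable U) (hV : Measurable V) (hUV : CondIndepFun m hm U V μ)
    (hU2 : MemLp U 2 μ) (hV2 : MemLp V 2 μ) (hW : StronglyMeasurable[m] W) (hW2 : MemLp W 2 μ) :
    μ[fun ω ↦ ⟪U ω - W ω, V ω - W ω⟫ | m]
      =ᵐ[μ] fun ω ↦ ⟪μ[U | m] ω - W ω, μ[V | m] ω - W ω⟫ := by
  have hUi := hU2.integrable one_le_two
  have hVi := hV2.integrable one_le_two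
  have hWi := hW2.integrable one_le_two
  have hS2 : MemLp (fun ω ↦ U ω + V ω - W ω) 2 μ := (hU2.add hV2).sub hW2
  -- the first term factors by conditional independence, the second by pulling out `W`
  have hsplit : (fun ω ↦ ⟪U ω - W ω, V ω - W ω⟫)
      = (fun ω ↦ ⟪U ω, V ω⟫) - fun ω ↦ ⟪W ω, U ω + V ω - W ω⟫ := by
    ext ω
    simp only [Pi.sub_apply, inner_sub_left, inner_sub_right, inner_add_right,
      real_inner_comm (W ω)]
    ring
  have hS : μ[fun ω ↦ U ω + V ω - W ω | m] =ᵐ[μ] fun ω ↦ μ[U | m] ω + μ[V | m] ω - W ω := by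
    filter_upwards [condExp_sub_of_stronglyMeasurable_right hm (hUi.add hVi) hW hWi,
      condExp_add hUi hVi m] with ω h₁ h₂
    exact h₁.trans (by rw [h₂, Pi.add_apply])
  have hpull : μ[fun ω ↦ ⟪W ω, U ω + V ω - W ω⟫ | m]
      =ᵐ[μ] fun ω ↦ ⟪W ω, μ[fun ω ↦ U ω + V ω - W ω | m] ω⟫ :=
    condExp_bilin_of_stronglyMeasurable_left (innerSL ℝ) hW (hW2.integrable_inner hS2)
      (hS2.integrable one_le_two)
  rw [hsplit]
  filter_upwards [condExp_sub (hU2.integrable_inner hV2) (hW2.integrable_inner hS2) m,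
    hUV.condExp_inner hU hV hUi hVi (hU2.integrable_inner hV2), hpull, hS]
    with ω h₁ h₂ h₃ h₄
  rw [h₁, Pi.sub_apply, h₂, h₃, h₄]
  simp only [inner_sub_left, inner_sub_right, inner_add_right, real_inner_comm (W ω)]
  ring

theorem integral_inner_sub_sub_of_condExp_eq_add_const {W : Ω → E} (c : E)
    (hU : Measurable U) (hV : Measurable V) (hUV : CondIndepFun m hm U V μ)
    (hU2 : MemLp U 2 μ) (hV2 : MemLp V 2 μ) (hW : StronglyMeasurable[m] W) (hW2 : MemLp W 2 μ)
    (hVW : μ[V | m] =ᵐ[μ] fun ω ↦ W ω + c) :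
    ∫ ω, ⟪U ω - W ω, V ω - W ω⟫ ∂μ = ⟪c, ∫ ω, U ω - W ω ∂μ⟫ := by
  have hcond : μ[fun ω ↦ ⟪U ω - W ω, V ω - W ω⟫ | m]
      =ᵐ[μ] fun ω ↦ ⟪c, μ[fun ω ↦ U ω - W ω | m] ω⟫ := by
    filter_upwards [hUV.condExp_inner_sub_sub hU hV hU2 hV2 hW hW2, hVW,
      condExp_sub_of_stronglyMeasurable_right hm (hU2.integrable one_le_two) hW
        (hW2.integrable one_le_two)] with ω h₁ h₂ h₃
    rw [h₁, h₂, h₃, add_sub_cancel_left, real_inner_comm]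
  calc ∫ ω, ⟪U ω - W ω, V ω - W ω⟫ ∂μ
      = ∫ ω, μ[fun ω ↦ ⟪U ω - W ω, V ω - W ω⟫ | m] ω ∂μ := (integral_condExp hm).symm
    _ = ∫ ω, ⟪c, μ[fun ω ↦ U ω - W ω | m] ω⟫ ∂μ := integral_congr_ae hcond
    _ = ⟪c, ∫ ω, U ω - W ω ∂μ⟫ := by rw [integral_inner integrable_condExp, integral_condExp hm]

end ProbabilityTheory.CondIndepFun

theorem neighbor2neighbor_theorem1_full_general
    {Ω : Type*} [MeasurableSpace Ω] [StandardBorelSpace Ω]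
    (μ : Measure Ω) [IsProbabilityMeasure μ]
    {d : ℕ} (X Y Z : Ω → EuclideanSpace ℝ (Fin d)) (ε : EuclideanSpace ℝ (Fin d))
    (hX : Measurable X) (hY : Measurable Y) (hZ : Measurable Z)
    (hCondInd : CondIndepFun (MeasurableSpace.comap X inferInstance) hX.comap_le Y Z μ)
    (hYsq : MemLp Y 2 μ)
    (hEY : μ[Y | MeasurableSpace.comap X inferInstance] =ᵐ[μ] X)
    (hZsq : MemLp Z 2 μ)
    (hEZ : μ[Z | MeasurableSpace.comap X inferInstance] =ᵐ[μ] fun ω => X ω + ε)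
    (f : EuclideanSpace ℝ (Fin d) → EuclideanSpace ℝ (Fin d))
    (hf : Measurable f) (hfY : MemLp (fun ω => f (Y ω)) 2 μ) :
    ∫ ω, ‖f (Y ω) - X ω‖ ^ 2 ∂μ
      = ∫ ω, ‖f (Y ω) - Z ω‖ ^ 2 ∂μ - ∫ ω, ‖Z ω - X ω‖ ^ 2 ∂μ
        + 2 * ⟪ε, ∫ ω, (f (Y ω) - X ω) ∂μ⟫ := by
  have hX2 : MemLp X 2 μ := (hYsq.condExp one_le_two).ae_eq hEY
  have hfYZ : CondIndepFun _ hX.comap_le (fun ω ↦ f (Y ω)) Z μ := hCondInd.comp hf measurable_id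
  have hcross := hfYZ.integral_inner_sub_sub_of_condExp_eq_add_const ε (by fun_prop) hZ hfY hZsq
    (comap_measurable X).stronglyMeasurable hX2 hEZ
  have hexpand := integral_norm_sub_sq (hfY.sub hX2) (hZsq.sub hX2)
  simp only [Pi.sub_apply, sub_sub_sub_cancel_right] at hexpand
  rw [hexpand, ← hcross]
  ring

/-- **Theorem 1 (full, unconditional-expectation form).**
If `Y` and `Z` are conditionally independent given `σ(X)`, with
`E[Y | σ(X)] = X` a.s. and `E[Z | σ(X)] = X + ε` a.s., and `Y`, `Z`, `f ∘ Y` are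
square-integrable, then
`E[‖f(Y) − X‖²] = E[‖f(Y) − Z‖²] − E[‖Z − X‖²] + 2⟨ε, E[f(Y) − X]⟩`. -/
theorem neighbor2neighbor_theorem1_full
    {Ω : Type*} [MeasurableSpace Ω] [StandardBorelSpace Ω] [Nonempty Ω]
    (μ : Measure Ω) [IsProbabilityMeasure μ]
    {d : ℕ} (X Y Z : Ω → EuclideanSpace ℝ (Fin d)) (ε : EuclideanSpace ℝ (Fin d))
    (hX : Measurable X) (hY : Measurable Y) (hZ : Measurable Z)
    (hCondInd : CondIndepFun (MeasurableSpace.comap X inferInstance) hX.comap_le Y Z μ)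
    (hYsq : MemLp Y 2 μ)
    (hEY : μ[Y | MeasurableSpace.comap X inferInstance] =ᵐ[μ] X)
    (hZsq : MemLp Z 2 μ)
    (hEZ : μ[Z | MeasurableSpace.comap X inferInstance] =ᵐ[μ] fun ω => X ω + ε)
    (f : EuclideanSpace ℝ (Fin d) → EuclideanSpace ℝ (Fin d))
    (hf : Measurable f) (hfY : MemLp (fun ω => f (Y ω)) 2 μ) :
    ∫ ω, ‖f (Y ω) - X ω‖ ^ 2 ∂μ
      = ∫ ω, ‖f (Y ω) - Z ω‖ ^ 2 ∂μ - ∫ ω, ‖Z ω - X ω‖ ^ 2 ∂μ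
        + 2 * ⟪ε, ∫ ω, (f (Y ω) - X ω) ∂μ⟫ :=
  neighbor2neighbor_theorem1_full_general μ X Y Z ε hX hY hZ hCondInd hYsq hEY hZsq hEZ f hf hfY
end

section
/- Let Y, Z : Ω → E be measurable random vectors on a probability space (Ω, μ) such that Y and Z are independent and Z is square-integrable with E[Z] = x for a fixed vector x ∈ E. Let f, g : E → E be measurable with f ∘ Y and g ∘ Y square-integrable. Then E[‖f(Y) − Z‖²] − E[‖g(Y) − Z‖²] = E[‖f(Y) − x‖²] − E[‖g(Y) − x‖²]. -/
/-!
Writing `W - Z = (W - x) - (Z - x)` with `x = E[Z]` and expanding the square, the cross term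
`E⟪W - x, Z - x⟫` factors by independence as `⟪E[W] - x, E[Z] - x⟫ = 0`. Hence
`E‖W - Z‖² = E‖W - x‖² + E‖Z - x‖²`, and the noise term `E‖Z - x‖²` does not depend on the
denoiser, so it cancels in the difference of the two risks.
-/

open MeasureTheory ProbabilityTheory

section Hilbert

variable {Ω E : Type*} [MeasurableSpace Ω] {μ : Measure Ω}
  [NormedAddCommGroup E] [InnerProductSpace ℝ E] [MeasurableSpace E] [BorelSpace E]

theorem ProbabilityTheory.IndepFun.integrable_inner_s3 {W Z : Ω → E} (hWZ : IndepFun W Z μ)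
    (hW : Integrable W μ) (hZ : Integrable Z μ) :
    Integrable (fun ω => inner ℝ (W ω) (Z ω)) μ :=
  hWZ.integrable_bilin hW hZ (innerSL ℝ)

theorem ProbabilityTheory.IndepFun.integral_inner_s3 [CompleteSpace E] {W Z : Ω → E} (hWZ : IndepFun W Z μ)
    (hW : Integrable W μ) (hZ : Integrable Z μ) :
    ∫ ω, inner ℝ (W ω) (Z ω) ∂μ = inner ℝ (∫ ω, W ω ∂μ) (∫ ω, Z ω ∂μ) :=
  hWZ.integral_bilin hW hZ (innerSL ℝ)

theorem ProbabilityTheory.IndepFun.integral_norm_sub_sq_s3 [CompleteSpace E] [IsProbabilityMeasure μ]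
    {W Z : Ω → E}
    (hWZ : IndepFun W Z μ) (hW : MemLp W 2 μ) (hZ : MemLp Z 2 μ) :
    ∫ ω, ‖W ω - Z ω‖ ^ 2 ∂μ
      = (∫ ω, ‖W ω - ∫ ω', Z ω' ∂μ‖ ^ 2 ∂μ) + ∫ ω, ‖Z ω - ∫ ω', Z ω' ∂μ‖ ^ 2 ∂μ := by
  set x := ∫ ω, Z ω ∂μ
  have hWx : MemLp (fun ω => W ω - x) 2 μ := hW.sub (memLp_const x)
  have hZx : MemLp (fun ω => Z ω - x) 2 μ := hZ.sub (memLp_const x)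
  have hind : IndepFun (fun ω => W ω - x) (fun ω => Z ω - x) μ :=
    hWZ.comp (continuous_sub_right x).measurable (continuous_sub_right x).measurable
  have hcross : ∫ ω, inner ℝ (W ω - x) (Z ω - x) ∂μ = 0 := by
    rw [hind.integral_inner_s3 (hWx.integrable one_le_two) (hZx.integrable one_le_two),
      integral_sub (hZ.integrable one_le_two) (integrable_const x), integral_const,
      probReal_univ, one_smul, sub_self, inner_zero_right]
  have hexpand : ∀ ω, ‖W ω - Z ω‖ ^ 2
      = ‖W ω - x‖ ^ 2 - 2 * inner ℝ (W ω - x) (Z ω - x) + ‖Z ω - x‖ ^ 2 := fun ω => by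
    rw [← norm_sub_sq_real, sub_sub_sub_cancel_right]
  have hcross_int : Integrable (fun ω => 2 * inner ℝ (W ω - x) (Z ω - x)) μ :=
    (hind.integrable_inner_s3 (hWx.integrable one_le_two) (hZx.integrable one_le_two)).const_mul 2
  have hWx_sq : Integrable (fun ω => ‖W ω - x‖ ^ 2) μ := hWx.integrable_norm_pow two_ne_zero
  have hfirst : Integrable (fun ω => ‖W ω - x‖ ^ 2 - 2 * inner ℝ (W ω - x) (Z ω - x)) μ :=
    hWx_sq.sub hcross_int
  simp_rw [hexpand]
  rw [integral_add hfirst (hZx.integrable_norm_pow two_ne_zero),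
    integral_sub hWx_sq hcross_int, integral_const_mul, hcross, mul_zero, sub_zero]

end Hilbert

theorem noise2noise_risk_difference_general
    {Ω : Type*} [MeasurableSpace Ω] (μ : Measure Ω) [IsProbabilityMeasure μ]
    {d : ℕ} (Y Z : Ω → EuclideanSpace ℝ (Fin d)) (x : EuclideanSpace ℝ (Fin d))
    (hInd : IndepFun Y Z μ)
    (hZsq : MemLp Z 2 μ) (hEZ : ∫ ω, Z ω ∂μ = x)
    (f g : EuclideanSpace ℝ (Fin d) → EuclideanSpace ℝ (Fin d))
    (hf : Measurable f) (hfY : MemLp (fun ω => f (Y ω)) 2 μ)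
    (hg : Measurable g) (hgY : MemLp (fun ω => g (Y ω)) 2 μ) :
    (∫ ω, ‖f (Y ω) - Z ω‖ ^ 2 ∂μ) - ∫ ω, ‖g (Y ω) - Z ω‖ ^ 2 ∂μ
      = (∫ ω, ‖f (Y ω) - x‖ ^ 2 ∂μ) - ∫ ω, ‖g (Y ω) - x‖ ^ 2 ∂μ := by
  have hfInd : IndepFun (fun ω => f (Y ω)) Z μ := hInd.comp hf measurable_id
  have hgInd : IndepFun (fun ω => g (Y ω)) Z μ := hInd.comp hg measurable_id
  rw [hfInd.integral_norm_sub_sq_s3 hfY hZsq, hgInd.integral_norm_sub_sq_s3 hgY hZsq, hEZ,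
    add_sub_add_right_eq_sub]

/-- **Denoiser comparison is the same under noisy and clean targets.**
If `Y` and `Z` are independent, `Z` square-integrable with `E[Z] = x`, and `f ∘ Y`,
`g ∘ Y` square-integrable, then
`E[‖f(Y) − Z‖²] − E[‖g(Y) − Z‖²] = E[‖f(Y) − x‖²] − E[‖g(Y) − x‖²]`. -/
theorem noise2noise_risk_difference
    {Ω : Type*} [MeasurableSpace Ω] (μ : Measure Ω) [IsProbabilityMeasure μ]
    {d : ℕ} (Y Z : Ω → EuclideanSpace ℝ (Fin d)) (x : EuclideanSpace ℝ (Fin d))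
    (hY : Measurable Y) (hZ : Measurable Z)
    (hInd : IndepFun Y Z μ)
    (hZsq : MemLp Z 2 μ) (hEZ : ∫ ω, Z ω ∂μ = x)
    (f g : EuclideanSpace ℝ (Fin d) → EuclideanSpace ℝ (Fin d))
    (hf : Measurable f) (hfY : MemLp (fun ω => f (Y ω)) 2 μ)
    (hg : Measurable g) (hgY : MemLp (fun ω => g (Y ω)) 2 μ) :
    (∫ ω, ‖f (Y ω) - Z ω‖ ^ 2 ∂μ) - ∫ ω, ‖g (Y ω) - Z ω‖ ^ 2 ∂μ
      = (∫ ω, ‖f (Y ω) - x‖ ^ 2 ∂μ) - ∫ ω, ‖g (Y ω) - x‖ ^ 2 ∂μ :=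
  noise2noise_risk_difference_general μ Y Z x hInd hZsq hEZ f g hf hfY hg hgY
end

section
/- Let Y, Z : Ω → E be measurable random vectors on a probability space (Ω, μ) such that Y and Z are independent and Z is square-integrable with E[Z] = x for a fixed vector x ∈ E. Let 𝓕 be a set of measurable functions f : E → E such that f ∘ Y is square-integrable for every f ∈ 𝓕, and let f₀ ∈ 𝓕. Then f₀ minimizes the noisy-target risk f ↦ E[‖f(Y) − Z‖²] over 𝓕 if and only if f₀ minimizes the clean-target (supervised) risk f ↦ E[‖f(Y) − x‖²] over 𝓕. -/
/-!
Expanding `‖f(Y) - Z‖² = ‖(f(Y) - x) - (Z - x)‖²`, the cross term `E⟪f(Y) - x, Z - x⟫` factors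
by independence as `⟪E f(Y) - x, E Z - x⟫ = 0`. Hence the noisy risk of every `f` is its clean risk
plus the constant `E‖Z - x‖²`, and the two risks have the same minimizers.
-/

open MeasureTheory ProbabilityTheory

namespace ProbabilityTheory

variable {Ω E : Type*} {mΩ : MeasurableSpace Ω} {μ : Measure Ω}
  [NormedAddCommGroup E] [InnerProductSpace ℝ E] [CompleteSpace E]
  [MeasurableSpace E] [BorelSpace E] {X Y : Ω → E}

theorem IndepFun.integral_inner_s4 (hXY : IndepFun X Y μ) (hX : Integrable X μ)
    (hY : Integrable Y μ) :
    ∫ ω, inner ℝ (X ω) (Y ω) ∂μ = inner ℝ (∫ ω, X ω ∂μ) (∫ ω, Y ω ∂μ) :=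
  hXY.integral_bilin hX hY (innerSL ℝ)

theorem IndepFun.integral_norm_sub_sq_of_integral_eq_zero [IsFiniteMeasure μ]
    (hXY : IndepFun X Y μ) (hX : MemLp X 2 μ) (hY : MemLp Y 2 μ) (hY₀ : ∫ ω, Y ω ∂μ = 0) :
    ∫ ω, ‖X ω - Y ω‖ ^ 2 ∂μ = ∫ ω, ‖X ω‖ ^ 2 ∂μ + ∫ ω, ‖Y ω‖ ^ 2 ∂μ := by
  have hX₁ := hX.integrable one_le_two
  have hY₁ := hY.integrable one_le_two
  have hXX := (memLp_two_iff_integrable_sq_norm hX.1).1 hX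
  have hYY := (memLp_two_iff_integrable_sq_norm hY.1).1 hY
  have hXY₁ : Integrable (fun ω ↦ 2 * inner ℝ (X ω) (Y ω)) μ :=
    (hXY.integrable_bilin hX₁ hY₁ (innerSL ℝ)).const_mul 2
  simp_rw [norm_sub_sq_real]
  rw [integral_add (by exact hXX.sub hXY₁) hYY, integral_sub hXX hXY₁, integral_const_mul,
    hXY.integral_inner_s4 hX₁ hY₁, hY₀, inner_zero_right, mul_zero, sub_zero]

theorem IndepFun.integral_norm_sub_sq_s4 [IsProbabilityMeasure μ] (hXY : IndepFun X Y μ)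
    (hX : MemLp X 2 μ) (hY : MemLp Y 2 μ) :
    ∫ ω, ‖X ω - Y ω‖ ^ 2 ∂μ
      = ∫ ω, ‖X ω - ∫ ω, Y ω ∂μ‖ ^ 2 ∂μ + ∫ ω, ‖Y ω - ∫ ω, Y ω ∂μ‖ ^ 2 ∂μ := by
  set m := ∫ ω, Y ω ∂μ
  have hcentered : IndepFun (fun ω ↦ X ω - m) (fun ω ↦ Y ω - m) μ :=
    hXY.comp (measurable_id.sub_const m) (measurable_id.sub_const m)
  have hY₀ : ∫ ω, (Y ω - m) ∂μ = 0 := by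
    rw [integral_sub (hY.integrable one_le_two) (integrable_const m), integral_const,
      probReal_univ, one_smul, sub_self]
  simpa only [sub_sub_sub_cancel_right] using
    hcentered.integral_norm_sub_sq_of_integral_eq_zero (hX.sub (memLp_const m))
      (hY.sub (memLp_const m)) hY₀

end ProbabilityTheory

theorem noise2noise_argmin_iff_general
    {Ω : Type*} [MeasurableSpace Ω] (μ : Measure Ω) [IsProbabilityMeasure μ]
    {d : ℕ} (Y Z : Ω → EuclideanSpace ℝ (Fin d)) (x : EuclideanSpace ℝ (Fin d))
    (hInd : IndepFun Y Z μ)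
    (hZsq : MemLp Z 2 μ) (hEZ : ∫ ω, Z ω ∂μ = x)
    (𝓕 : Set (EuclideanSpace ℝ (Fin d) → EuclideanSpace ℝ (Fin d)))
    (h𝓕meas : ∀ f ∈ 𝓕, Measurable f)
    (h𝓕sq : ∀ f ∈ 𝓕, MemLp (fun ω => f (Y ω)) 2 μ)
    (f₀ : EuclideanSpace ℝ (Fin d) → EuclideanSpace ℝ (Fin d)) (hf₀ : f₀ ∈ 𝓕) :
    (∀ f ∈ 𝓕, ∫ ω, ‖f₀ (Y ω) - Z ω‖ ^ 2 ∂μ ≤ ∫ ω, ‖f (Y ω) - Z ω‖ ^ 2 ∂μ)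
      ↔ (∀ f ∈ 𝓕, ∫ ω, ‖f₀ (Y ω) - x‖ ^ 2 ∂μ ≤ ∫ ω, ‖f (Y ω) - x‖ ^ 2 ∂μ) := by
  have noisy_risk_eq : ∀ f ∈ 𝓕, ∫ ω, ‖f (Y ω) - Z ω‖ ^ 2 ∂μ
      = ∫ ω, ‖f (Y ω) - x‖ ^ 2 ∂μ + ∫ ω, ‖Z ω - x‖ ^ 2 ∂μ := fun f hf ↦ by
    rw [← hEZ]
    exact (hInd.comp (h𝓕meas f hf) measurable_id).integral_norm_sub_sq_s4 (h𝓕sq f hf) hZsq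
  refine forall₂_congr fun f hf ↦ ?_
  rw [noisy_risk_eq f hf, noisy_risk_eq f₀ hf₀, add_le_add_iff_right]

/-- **Noise2Noise: minimizing against an unbiased noisy target is equivalent to
supervised training.**  If `Y` and `Z` are independent, `Z` square-integrable with
`E[Z] = x`, and `𝓕` is a family of measurable denoisers with square-integrable
outputs on `Y`, then `f₀ ∈ 𝓕` minimizes `f ↦ E[‖f(Y) − Z‖²]` over `𝓕` iff it
minimizes the supervised risk `f ↦ E[‖f(Y) − x‖²]` over `𝓕`. -/
theorem noise2noise_argmin_iff
    {Ω : Type*} [MeasurableSpace Ω] (μ : Measure Ω) [IsProbabilityMeasure μ]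
    {d : ℕ} (Y Z : Ω → EuclideanSpace ℝ (Fin d)) (x : EuclideanSpace ℝ (Fin d))
    (hY : Measurable Y) (hZ : Measurable Z)
    (hInd : IndepFun Y Z μ)
    (hZsq : MemLp Z 2 μ) (hEZ : ∫ ω, Z ω ∂μ = x)
    (𝓕 : Set (EuclideanSpace ℝ (Fin d) → EuclideanSpace ℝ (Fin d)))
    (h𝓕meas : ∀ f ∈ 𝓕, Measurable f)
    (h𝓕sq : ∀ f ∈ 𝓕, MemLp (fun ω => f (Y ω)) 2 μ)
    (f₀ : EuclideanSpace ℝ (Fin d) → EuclideanSpace ℝ (Fin d)) (hf₀ : f₀ ∈ 𝓕) :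
    (∀ f ∈ 𝓕, ∫ ω, ‖f₀ (Y ω) - Z ω‖ ^ 2 ∂μ ≤ ∫ ω, ‖f (Y ω) - Z ω‖ ^ 2 ∂μ)
      ↔ (∀ f ∈ 𝓕, ∫ ω, ‖f₀ (Y ω) - x‖ ^ 2 ∂μ ≤ ∫ ω, ‖f (Y ω) - x‖ ^ 2 ∂μ) :=
  noise2noise_argmin_iff_general μ Y Z x hInd hZsq hEZ 𝓕 h𝓕meas h𝓕sq f₀ hf₀
end
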